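/- Let A be an associative k-algebra with subalgebra R and e ∈ R an idempotent with ReR = R. Then the multiplication by e induces an isomorphism of eAe-bimodules e·Ω¹_R(A)·e ≅ Ω¹_{eRe}(eAe), where Ω¹_R(A) = ker(A ⊗_R A → A) is the bimodule of noncommutative relative 1-forms. -/

import Mathlib

open scoped TensorProduct

section

variable (k : Type*) [Field k] (A : Type*) [Ring A] [Algebra k A]

/-- The balancing relations over `R ⊆ A` inside `A ⊗[k] A`: the quotient is `A ⊗_R A`. -/
def balancingA (S : Set A) : Submodule k (A ⊗[k] A) :=
  Submodule.span k
    {z : A ⊗[k] A | ∃ (x y r : A), r ∈ S ∧ z = (x * r) ⊗ₜ[k] y - x ⊗ₜ[k] (r * y)}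

/-- The image of `eAe ⊗[k] eAe` inside `A ⊗[k] A`. -/
def cornerTensorA (e : A) : Submodule k (A ⊗[k] A) :=
  Submodule.span k
    {z : A ⊗[k] A | ∃ x y : A, z = (e * x * e) ⊗ₜ[k] (e * y * e)}

/-- The balancing relations over `eRe` inside the image of `eAe ⊗[k] eAe`:
the quotient is `eAe ⊗_{eRe} eAe`. -/
def cornerBalancingA (e : A) (S : Set A) : Submodule k (A ⊗[k] A) :=
  Submodule.span k
    {z : A ⊗[k] A | ∃ (x y r : A), r ∈ S ∧
      z = ((e * x * e) * (e * r * e)) ⊗ₜ[k] (e * y * e) -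
        (e * x * e) ⊗ₜ[k] ((e * r * e) * (e * y * e))}

end

/-! Since `ReR = R`, write `1 = ∑ i, p i * e * q i` with `p i, q i ∈ R`. Then
`x ⊗ y ↦ ∑ i, e x p_i e ⊗ e q_i y e` is well defined on `A ⊗_R A`: a scalar `r ∈ R` is moved
across the tensor sign by inserting this decomposition of `1` next to it, which produces the
coefficients `q_j r p_i ∈ R`. This map is a left inverse of the canonical map
`c : eAe ⊗_{eRe} eAe → A ⊗_R A`, and `c` composed with it is `v ↦ e v e`. Hence `c` is a
bijection onto `e (A ⊗_R A) e`, and since it commutes with multiplication and the bimodule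
actions it restricts to the kernels. -/

theorem sum_mul_decomp_mul {A : Type*} [Semiring A] {ι : Type*} [Fintype ι] {p q : ι → A}
    {e : A} (hdec : (1 : A) = ∑ i, p i * e * q i) (a b : A) :
    ∑ i, a * (p i * (e * (q i * b))) = a * b := by
  have hterm : ∀ i, a * (p i * (e * (q i * b))) = a * (p i * e * q i) * b := fun i => by
    simp only [mul_assoc]
  rw [Finset.sum_congr rfl fun i _ => hterm i, ← Finset.sum_mul, ← Finset.mul_sum, ← hdec,
    mul_one]

section CornerTensor

variable {k : Type*} [Field k] {A : Type*} [Ring A] [Algebra k A]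

variable (k A) in
abbrev BalancedTensor (S : Set A) : Type _ := (A ⊗[k] A) ⧸ balancingA k A S

variable (k A) in
abbrev CornerTensor (e : A) (S : Set A) : Type _ :=
  cornerTensorA k A e ⧸ (cornerBalancingA k A e S).comap (cornerTensorA k A e).subtype

section Balanced

variable {S : Set A}

theorem BalancedTensor.hom_ext {M : Type*} [AddCommGroup M] [Module k M]
    {f g : BalancedTensor k A S →ₗ[k] M}
    (h : ∀ x y : A, f (Submodule.Quotient.mk (x ⊗ₜ y)) = g (Submodule.Quotient.mk (x ⊗ₜ y))) :
    f = g :=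
  Submodule.linearMap_qext _ (TensorProduct.ext' h)

theorem BalancedTensor.mk_mul_tmul {r : A} (hr : r ∈ S) (x y : A) :
    (Submodule.Quotient.mk ((x * r) ⊗ₜ[k] y) : BalancedTensor k A S) =
      Submodule.Quotient.mk (x ⊗ₜ (r * y)) :=
  (Submodule.Quotient.eq _).2 (Submodule.subset_span ⟨x, y, r, hr, rfl⟩)

end Balanced

section Corner

variable (e : A) (S : Set A)

theorem map_mulLeftRight_mem_cornerTensorA (z : A ⊗[k] A) :
    TensorProduct.map (LinearMap.mulLeftRight k (e, e)) (LinearMap.mulLeftRight k (e, e)) z ∈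
      cornerTensorA k A e := by
  induction z using TensorProduct.induction_on with
  | zero => simp
  | tmul x y => exact Submodule.subset_span ⟨x, y, rfl⟩
  | add u v hu hv => rw [map_add]; exact add_mem hu hv

noncomputable def cornerProj : A ⊗[k] A →ₗ[k] CornerTensor k A e S :=
  Submodule.mkQ _ ∘ₗ LinearMap.codRestrict _ _ (map_mulLeftRight_mem_cornerTensorA e)

theorem cornerProj_tmul (x y : A) :
    cornerProj e S (x ⊗ₜ[k] y) =
      Submodule.Quotient.mk ⟨(e * x * e) ⊗ₜ (e * y * e), Submodule.subset_span ⟨x, y, rfl⟩⟩ :=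
  rfl

variable {e S}

theorem CornerTensor.hom_ext {M : Type*} [AddCommGroup M] [Module k M]
    {f g : CornerTensor k A e S →ₗ[k] M}
    (h : ∀ x y : A, f (cornerProj e S (x ⊗ₜ y)) = g (cornerProj e S (x ⊗ₜ y))) : f = g := by
  refine Submodule.linearMap_qext _ (LinearMap.ext_on Submodule.span_span_coe_preimage ?_)
  rintro ⟨z, hz⟩ ⟨x, y, rfl⟩
  exact h x y

theorem cornerProj_tmul_congr {x x' y y' : A} (hx : e * x * e = e * x' * e)
    (hy : e * y * e = e * y' * e) :
    cornerProj e S (x ⊗ₜ[k] y) = cornerProj e S (x' ⊗ₜ y') := by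
  simp only [cornerProj_tmul, hx, hy]

theorem cornerProj_mul_tmul (hidem : IsIdempotentElem e) {r : A} (hr : r ∈ S) (x y : A) :
    cornerProj e S ((x * e * r) ⊗ₜ[k] y) = cornerProj e S (x ⊗ₜ (r * e * y)) := by
  rw [cornerProj_tmul, cornerProj_tmul, Submodule.Quotient.eq]
  refine Submodule.mem_comap.2 (Submodule.subset_span ⟨x, y, r, hr, ?_⟩)
  simp only [Submodule.coe_subtype, Submodule.coe_sub, mul_assoc, hidem.mul_self_mul]

end Corner

section Retraction

variable {e : A} {R : Subalgebra k A} {ι : Type*} [Fintype ι] {p q : ι → A}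

variable (e R p q) in
noncomputable def cornerSplit : A ⊗[k] A →ₗ[k] CornerTensor k A e R :=
  ∑ i, cornerProj e R ∘ₗ
    TensorProduct.map (LinearMap.mulRight k (p i)) (LinearMap.mulLeft k (q i))

theorem cornerSplit_tmul (x y : A) :
    cornerSplit e R p q (x ⊗ₜ y) = ∑ i, cornerProj e R ((x * p i) ⊗ₜ (q i * y)) := by
  simp [cornerSplit]

theorem balancingA_le_ker_cornerSplit (hidem : IsIdempotentElem e) (hp : ∀ i, p i ∈ R)
    (hq : ∀ i, q i ∈ R) (hdec : (1 : A) = ∑ i, p i * e * q i) :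
    balancingA k A R ≤ LinearMap.ker (cornerSplit e R p q) := by
  rw [balancingA, Submodule.span_le]
  rintro _ ⟨x, y, r, hr, rfl⟩
  rw [SetLike.mem_coe, LinearMap.mem_ker, map_sub, sub_eq_zero, cornerSplit_tmul,
    cornerSplit_tmul]
  calc ∑ i, cornerProj e R ((x * r * p i) ⊗ₜ (q i * y))
      = ∑ i, ∑ j, cornerProj e R ((x * p j * e * (q j * r * p i)) ⊗ₜ (q i * y)) := by
        refine Finset.sum_congr rfl fun i _ => ?_
        rw [← map_sum, ← TensorProduct.sum_tmul]
        congr 2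
        simpa only [mul_assoc] using (sum_mul_decomp_mul hdec x (r * p i)).symm
    _ = ∑ i, ∑ j, cornerProj e R ((x * p j) ⊗ₜ (q j * r * p i * e * (q i * y))) := by
        simp only [cornerProj_mul_tmul hidem (mul_mem (mul_mem (hq _) hr) (hp _))]
    _ = ∑ j, ∑ i, cornerProj e R ((x * p j) ⊗ₜ (q j * r * p i * e * (q i * y))) :=
        Finset.sum_comm
    _ = ∑ j, cornerProj e R ((x * p j) ⊗ₜ (q j * (r * y))) := by
        refine Finset.sum_congr rfl fun j _ => ?_
        rw [← map_sum, ← TensorProduct.tmul_sum]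
        congr 2
        simpa only [mul_assoc] using sum_mul_decomp_mul hdec (q j * r) y

noncomputable def cornerRetraction (hidem : IsIdempotentElem e) (hp : ∀ i, p i ∈ R)
    (hq : ∀ i, q i ∈ R) (hdec : (1 : A) = ∑ i, p i * e * q i) :
    BalancedTensor k A R →ₗ[k] CornerTensor k A e R :=
  (balancingA k A R).liftQ _ (balancingA_le_ker_cornerSplit hidem hp hq hdec)

theorem cornerRetraction_mk_corner (hidem : IsIdempotentElem e) (hp : ∀ i, p i ∈ R)
    (hq : ∀ i, q i ∈ R) (hdec : (1 : A) = ∑ i, p i * e * q i) (x y : A) :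
    cornerRetraction hidem hp hq hdec (Submodule.Quotient.mk ((e * x * e) ⊗ₜ (e * y * e))) =
      cornerProj e R (x ⊗ₜ y) := by
  rw [cornerRetraction, Submodule.liftQ_apply, cornerSplit_tmul]
  calc ∑ i, cornerProj e R ((e * x * e * p i) ⊗ₜ (q i * (e * y * e)))
      = ∑ i, cornerProj e R ((x * e * p i) ⊗ₜ (q i * e * y)) :=
        Finset.sum_congr rfl fun i _ => cornerProj_tmul_congr
          (by simp only [mul_assoc, hidem.mul_self_mul]) (by simp only [mul_assoc, hidem.eq])
    _ = ∑ i, cornerProj e R (x ⊗ₜ (p i * e * (q i * e * y))) :=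
        Finset.sum_congr rfl fun i _ => cornerProj_mul_tmul hidem (hp i) _ _
    _ = cornerProj e R (x ⊗ₜ y) := by
        rw [← map_sum, ← TensorProduct.tmul_sum]
        refine cornerProj_tmul_congr rfl ?_
        simpa only [mul_assoc, one_mul, hidem.mul_self_mul] using
          congrArg (e * · * e) (sum_mul_decomp_mul hdec 1 (e * y))

theorem apply_cornerRetraction_mk (hidem : IsIdempotentElem e) (he : e ∈ R)
    (hp : ∀ i, p i ∈ R) (hq : ∀ i, q i ∈ R) (hdec : (1 : A) = ∑ i, p i * e * q i)
    {c : CornerTensor k A e R →ₗ[k] BalancedTensor k A R}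
    (hc : ∀ x y, c (cornerProj e R (x ⊗ₜ y)) = Submodule.Quotient.mk ((e * x * e) ⊗ₜ (e * y * e)))
    (x y : A) :
    c (cornerRetraction hidem hp hq hdec (Submodule.Quotient.mk (x ⊗ₜ y))) =
      Submodule.Quotient.mk ((e * x) ⊗ₜ (y * e)) := by
  rw [cornerRetraction, Submodule.liftQ_apply, cornerSplit_tmul, map_sum]
  simp only [hc]
  calc ∑ i, (Submodule.Quotient.mk ((e * (x * p i) * e) ⊗ₜ (e * (q i * y) * e)) :
        BalancedTensor k A R)
      = ∑ i, Submodule.Quotient.mk ((e * x * (p i * e)) ⊗ₜ (e * (q i * y) * e)) := by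
        simp only [mul_assoc]
    _ = ∑ i, Submodule.Quotient.mk ((e * x) ⊗ₜ (p i * e * (e * (q i * y) * e))) :=
        Finset.sum_congr rfl fun i _ => BalancedTensor.mk_mul_tmul (mul_mem (hp i) he) _ _
    _ = Submodule.Quotient.mk ((e * x) ⊗ₜ (y * e)) := by
        simp only [← Submodule.mkQ_apply, ← map_sum, ← TensorProduct.tmul_sum]
        congr 2
        simpa only [mul_assoc, one_mul, hidem.mul_self_mul] using
          sum_mul_decomp_mul hdec 1 (y * e)

end Retraction

end CornerTensor

/-- We model `A ⊗_R A` as `(A ⊗[k] A)/balancing` and `eAe ⊗_{eRe} eAe` as the corresponding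
corner quotient; the multiplication maps `m̄`, `m̄ₑ`, the canonical map `c`, and the
bimodule actions are quantified with their characterizing properties.  The conclusion says
that `c` restricts to an `eAe`-bilinear bijection from `Ω¹_{eRe}(eAe) = ker m̄ₑ` onto
`e·Ω¹_R(A)·e = {v ∈ ker m̄ | e·v·e = v}`. -/
theorem corner_one_forms_iso
    {k : Type*} [Field k] {A : Type*} [Ring A] [Algebra k A]
    (R : Subalgebra k A) (e : A) (he : e ∈ R) (hidem : e * e = e)
    {ι : Type*} [Fintype ι] (p q : ι → A)
    (hp : ∀ i, p i ∈ R) (hq : ∀ i, q i ∈ R)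
    (hdec : (1 : A) = ∑ i, p i * e * q i)
    -- the multiplication map on `A ⊗_R A`
    (mbar : ((A ⊗[k] A) ⧸ balancingA k A ↑R) →ₗ[k] A)
    (hmbar : ∀ x y : A, mbar (Submodule.Quotient.mk (x ⊗ₜ[k] y)) = x * y)
    -- the outer bimodule actions on `A ⊗_R A`
    (lmul rmul : A → ((A ⊗[k] A) ⧸ balancingA k A ↑R) →ₗ[k]
      ((A ⊗[k] A) ⧸ balancingA k A ↑R))
    (hlmul : ∀ a x y : A,
      lmul a (Submodule.Quotient.mk (x ⊗ₜ[k] y)) = Submodule.Quotient.mk ((a * x) ⊗ₜ[k] y))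
    (hrmul : ∀ a x y : A,
      rmul a (Submodule.Quotient.mk (x ⊗ₜ[k] y)) = Submodule.Quotient.mk (x ⊗ₜ[k] (y * a)))
    -- the multiplication map on `eAe ⊗_{eRe} eAe`
    (mbarE : (cornerTensorA k A e ⧸
        (cornerBalancingA k A e ↑R).comap (cornerTensorA k A e).subtype) →ₗ[k] A)
    (hmbarE : ∀ x y : A,
      mbarE (Submodule.Quotient.mk
        ⟨(e * x * e) ⊗ₜ[k] (e * y * e), Submodule.subset_span ⟨x, y, rfl⟩⟩) =
          (e * x * e) * (e * y * e))
    -- the corner bimodule actions on `eAe ⊗_{eRe} eAe`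
    (lmulE rmulE : A → (cornerTensorA k A e ⧸
        (cornerBalancingA k A e ↑R).comap (cornerTensorA k A e).subtype) →ₗ[k]
      (cornerTensorA k A e ⧸
        (cornerBalancingA k A e ↑R).comap (cornerTensorA k A e).subtype))
    (hlmulE : ∀ a x y : A,
      lmulE a (Submodule.Quotient.mk
          ⟨(e * x * e) ⊗ₜ[k] (e * y * e), Submodule.subset_span ⟨x, y, rfl⟩⟩) =
        Submodule.Quotient.mk
          ⟨(e * (a * e * x) * e) ⊗ₜ[k] (e * y * e),
            Submodule.subset_span ⟨a * e * x, y, rfl⟩⟩)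
    (hrmulE : ∀ a x y : A,
      rmulE a (Submodule.Quotient.mk
          ⟨(e * x * e) ⊗ₜ[k] (e * y * e), Submodule.subset_span ⟨x, y, rfl⟩⟩) =
        Submodule.Quotient.mk
          ⟨(e * x * e) ⊗ₜ[k] (e * (y * e * a) * e),
            Submodule.subset_span ⟨x, y * e * a, rfl⟩⟩)
    -- the canonical map `eAe ⊗_{eRe} eAe → A ⊗_R A`
    (c : (cornerTensorA k A e ⧸
        (cornerBalancingA k A e ↑R).comap (cornerTensorA k A e).subtype) →ₗ[k]
      ((A ⊗[k] A) ⧸ balancingA k A ↑R))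
    (hc : ∀ (z : A ⊗[k] A) (hz : z ∈ cornerTensorA k A e),
      c (Submodule.Quotient.mk ⟨z, hz⟩) = Submodule.Quotient.mk z) :
    -- `c` maps `Ω¹_{eRe}(eAe)` into `e·Ω¹_R(A)·e` …
    (∀ w, mbarE w = 0 → mbar (c w) = 0 ∧ lmul e (rmul e (c w)) = c w) ∧
    -- … bijectively …
    (∀ w w', mbarE w = 0 → mbarE w' = 0 → c w = c w' → w = w') ∧
    (∀ v, mbar v = 0 → lmul e (rmul e v) = v → ∃ w, mbarE w = 0 ∧ c w = v) ∧
    -- … and `eAe`-bilinearly.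
    (∀ (a : A) w, c (lmulE a w) = lmul (e * a * e) (c w) ∧
      c (rmulE a w) = rmul (e * a * e) (c w)) := by
  have hc' : ∀ x y, c (cornerProj e R (x ⊗ₜ y)) =
      Submodule.Quotient.mk ((e * x * e) ⊗ₜ (e * y * e)) := fun x y => hc _ _
  set φ := cornerRetraction hidem hp hq hdec
  have hφc : Function.LeftInverse φ c := LinearMap.congr_fun (f := φ ∘ₗ c) (g := LinearMap.id)
    (CornerTensor.hom_ext fun x y => by
      rw [LinearMap.comp_apply, hc']
      exact cornerRetraction_mk_corner hidem hp hq hdec x y)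
  have hcφ : ∀ v, c (φ v) = lmul e (rmul e v) := LinearMap.congr_fun (f := c ∘ₗ φ)
    (g := lmul e ∘ₗ rmul e) (BalancedTensor.hom_ext fun x y => by
      rw [LinearMap.comp_apply, LinearMap.comp_apply, hrmul, hlmul]
      exact apply_cornerRetraction_mk hidem he hp hq hdec hc' x y)
  have hmc : ∀ w, mbar (c w) = mbarE w := LinearMap.congr_fun (f := mbar ∘ₗ c)
    (CornerTensor.hom_ext fun x y => by rw [LinearMap.comp_apply, hc', hmbar, cornerProj_tmul, hmbarE])
  refine ⟨fun w hw => ⟨(hmc w).trans hw, ?_⟩, fun w w' _ _ h => hφc.injective h,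
    fun v hv hev => ⟨φ v, by rw [← hmc, hcφ, hev, hv], by rw [hcφ, hev]⟩, fun a w => ⟨?_, ?_⟩⟩
  · exact LinearMap.congr_fun (f := lmul e ∘ₗ rmul e ∘ₗ c) (CornerTensor.hom_ext fun x y => by
      simp only [LinearMap.comp_apply, hc', hrmul, hlmul, mul_assoc, hidem,
        IsIdempotentElem.mul_self_mul hidem]) w
  · exact LinearMap.congr_fun (f := c ∘ₗ lmulE a) (g := lmul (e * a * e) ∘ₗ c)
      (CornerTensor.hom_ext fun x y => by
        rw [LinearMap.comp_apply, LinearMap.comp_apply, cornerProj_tmul, hlmulE]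
        simp only [hc, hlmul, mul_assoc, IsIdempotentElem.mul_self_mul hidem]) w
  · exact LinearMap.congr_fun (f := c ∘ₗ rmulE a) (g := rmul (e * a * e) ∘ₗ c)
      (CornerTensor.hom_ext fun x y => by
        rw [LinearMap.comp_apply, LinearMap.comp_apply, cornerProj_tmul, hrmulE]
        simp only [hc, hrmul, mul_assoc, IsIdempotentElem.mul_self_mul hidem]) w
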